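/- Let c₂, c₃, U₀ > 0 with U₀·c₃ > 4c₂, and let W : [0, ∞) → ℝ be continuous such that W(t) ≥ V(t) for all t, where V(t) := U₀ + ∫₀ᵗ c₃ (1 + c₂ s)^{-5} W(s)² ds. Then there is no such W defined on all of [0, ∞); i.e., the assumptions are contradictory for the full half-line. -/

import Mathlib

/-!
Set `V t = U₀ + ∫₀ᵗ k W²` with `k s = c₃ (1 + c₂ s)⁻⁵`. Then `V` is positive and
`V' = k W² ≥ k V²`, so `t ↦ 1 / V t + ∫₀ᵗ k` is antitone and `∫₀ᵀ k < 1 / U₀` for every `T`. But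
`∫₀ᵀ k = c₃ / (4 c₂) · (1 - (1 + c₂ T)⁻⁴)` tends to `c₃ / (4 c₂) > 1 / U₀`.
-/

open MeasureTheory Set Filter Topology

theorem sub_le_inv_sub_inv_of_mul_sq_le_deriv {V V' K k : ℝ → ℝ} {a b : ℝ} (hab : a ≤ b)
    (hV : ContinuousOn V (Icc a b)) (hK : ContinuousOn K (Icc a b))
    (hV₀ : ∀ t ∈ Icc a b, V t ≠ 0)
    (hV' : ∀ t ∈ Ioo a b, HasDerivAt V (V' t) t) (hK' : ∀ t ∈ Ioo a b, HasDerivAt K (k t) t)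
    (hriccati : ∀ t ∈ Ioo a b, k t * V t ^ 2 ≤ V' t) :
    K b - K a ≤ (V a)⁻¹ - (V b)⁻¹ := by
  have hanti : AntitoneOn (fun t => (V t)⁻¹ + K t) (Icc a b) := by
    refine antitoneOn_of_hasDerivWithinAt_nonpos (convex_Icc a b) ((hV.inv₀ hV₀).add hK)
      (f' := fun t => -V' t / V t ^ 2 + k t) (fun t ht => ?_) (fun t ht => ?_) <;>
      rw [interior_Icc] at ht
    · exact (((hV' t ht).inv (hV₀ t (Ioo_subset_Icc_self ht))).add
        (hK' t ht)).hasDerivWithinAt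
    · have hsq : 0 < V t ^ 2 := pow_two_pos_of_ne_zero (hV₀ t (Ioo_subset_Icc_self ht))
      rw [neg_div, neg_add_nonpos_iff, le_div_iff₀ hsq]
      exact hriccati t ht
  linarith [hanti (left_mem_Icc.2 hab) (right_mem_Icc.2 hab) hab]

theorem hasDerivAt_primitive_of_continuousOn {f : ℝ → ℝ} {a b t : ℝ}
    (hf : ContinuousOn f (Icc a b)) (ht : t ∈ Ioo a b) :
    HasDerivAt (fun u => ∫ s in a..u, f s) (f t) t :=
  intervalIntegral.integral_hasDerivAt_right
    ((hf.mono (Icc_subset_Icc le_rfl ht.2.le)).intervalIntegrable_of_Icc ht.1.le)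
    ((hf.mono Ioo_subset_Icc_self).stronglyMeasurableAtFilter isOpen_Ioo t ht)
    (hf.continuousAt (Icc_mem_nhds ht.1 ht.2))

theorem continuousOn_primitive_of_continuousOn {f : ℝ → ℝ} {a b : ℝ} (hab : a ≤ b)
    (hf : ContinuousOn f (Icc a b)) :
    ContinuousOn (fun u => ∫ s in a..u, f s) (Icc a b) := by
  simpa [uIcc_of_le hab] using intervalIntegral.continuousOn_primitive_interval (μ := volume)
    (hf.integrableOn_Icc.mono_set (uIcc_of_le hab).subset)

theorem integral_lt_inv_of_add_integral_mul_sq_le {k W : ℝ → ℝ} {a b U₀ : ℝ} (hab : a ≤ b)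
    (hU₀ : 0 < U₀) (hk : ContinuousOn k (Icc a b)) (hk₀ : ∀ t ∈ Icc a b, 0 ≤ k t)
    (hW : ContinuousOn W (Icc a b))
    (hineq : ∀ t ∈ Icc a b, U₀ + ∫ s in a..t, k s * W s ^ 2 ≤ W t) :
    ∫ s in a..b, k s < U₀⁻¹ := by
  set V := fun t => U₀ + ∫ s in a..t, k s * W s ^ 2
  have hf : ContinuousOn (fun s => k s * W s ^ 2) (Icc a b) := hk.mul (hW.pow 2)
  have hVpos : ∀ t ∈ Icc a b, 0 < V t := fun t ht =>
    hU₀.trans_le <| le_add_of_nonneg_right <| intervalIntegral.integral_nonneg ht.1 fun s hs =>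
      mul_nonneg (hk₀ s ⟨hs.1, hs.2.trans ht.2⟩) (sq_nonneg _)
  have hriccati : ∀ t ∈ Ioo a b, k t * V t ^ 2 ≤ k t * W t ^ 2 := fun t ht =>
    have ht' := Ioo_subset_Icc_self ht
    mul_le_mul_of_nonneg_left (pow_le_pow_left₀ (hVpos t ht').le (hineq t ht') 2) (hk₀ t ht')
  have hcomp := sub_le_inv_sub_inv_of_mul_sq_le_deriv (V := V) hab
    (continuousOn_const.add (continuousOn_primitive_of_continuousOn hab hf))
    (continuousOn_primitive_of_continuousOn hab hk) (fun t ht => (hVpos t ht).ne')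
    (fun t ht => (hasDerivAt_primitive_of_continuousOn hf ht).const_add U₀)
    (fun t ht => hasDerivAt_primitive_of_continuousOn hk ht) hriccati
  have hVa : V a = U₀ := by simp [V]
  rw [hVa, intervalIntegral.integral_same, sub_zero] at hcomp
  linarith [inv_pos.2 (hVpos b (right_mem_Icc.2 hab))]

theorem hasDerivAt_one_add_mul_zpow_neg_four {c r t : ℝ} (hr : r ≠ 0) (ht : 1 + r * t ≠ 0) :
    HasDerivAt (fun t => -(c / (4 * r)) * (1 + r * t) ^ (-4 : ℤ))
      (c * (1 + r * t) ^ (-5 : ℤ)) t := by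
  have hlin : HasDerivAt (fun t => 1 + r * t) r t := by
    simpa using ((hasDerivAt_id t).const_mul r).const_add 1
  refine (((hasDerivAt_zpow (-4) _ (Or.inl ht)).comp t hlin).const_mul
    (-(c / (4 * r)))).congr_deriv ?_
  norm_num
  field_simp

theorem continuousOn_mul_one_add_mul_zpow (c : ℝ) {r : ℝ} (hr : 0 ≤ r) (m : ℤ) :
    ContinuousOn (fun s => c * (1 + r * s) ^ m) (Ici 0) :=
  continuousOn_const.mul <|
    (continuousOn_const.add (continuousOn_const.mul continuousOn_id)).zpow₀ m
      fun _ hs => Or.inl (add_pos_of_pos_of_nonneg one_pos (mul_nonneg hr hs)).ne'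

theorem integral_mul_one_add_mul_zpow_neg_five {c r T : ℝ} (hr : 0 < r) (hT : 0 ≤ T) :
    ∫ s in (0 : ℝ)..T, c * (1 + r * s) ^ (-5 : ℤ) =
      c / (4 * r) * (1 - (1 + r * T) ^ (-4 : ℤ)) := by
  have hderiv : ∀ s ∈ uIcc 0 T, HasDerivAt (fun t => -(c / (4 * r)) * (1 + r * t) ^ (-4 : ℤ))
      (c * (1 + r * s) ^ (-5 : ℤ)) s := fun s hs =>
    hasDerivAt_one_add_mul_zpow_neg_four hr.ne'
      (add_pos_of_pos_of_nonneg one_pos (mul_nonneg hr.le (uIcc_of_le hT ▸ hs).1)).ne'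
  rw [intervalIntegral.integral_eq_sub_of_hasDerivAt hderiv
    (((continuousOn_mul_one_add_mul_zpow c hr.le _).mono Icc_subset_Ici_self)
      |>.intervalIntegrable_of_Icc hT)]
  simp only [mul_zero, add_zero, one_zpow, mul_one]
  ring

theorem stmt_15 (c₂ c₃ U₀ : ℝ) (hc₂ : 0 < c₂) (hc₃ : 0 < c₃) (hU₀ : 0 < U₀)
    (hbig : U₀ * c₃ > 4 * c₂)
    (W : ℝ → ℝ) (hW : ContinuousOn W (Ici 0))
    (hineq : ∀ t ≥ (0:ℝ),
      W t ≥ U₀ + ∫ s in (0:ℝ)..t, c₃ * (1 + c₂ * s) ^ (-5 : ℤ) * W s ^ 2) :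
    False := by
  have hbound : ∀ T ≥ (0 : ℝ), c₃ / (4 * c₂) * (1 - (1 + c₂ * T) ^ (-4 : ℤ)) < U₀⁻¹ := by
    intro T hT
    rw [← integral_mul_one_add_mul_zpow_neg_five hc₂ hT]
    refine integral_lt_inv_of_add_integral_mul_sq_le hT hU₀
      ((continuousOn_mul_one_add_mul_zpow c₃ hc₂.le _).mono Icc_subset_Ici_self)
      (fun t ht => ?_) (hW.mono Icc_subset_Ici_self) fun t ht => hineq t ht.1
    have := zpow_pos (add_pos_of_pos_of_nonneg one_pos (mul_nonneg hc₂.le ht.1)) (-5)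
    positivity
  have hlim : Tendsto (fun T => c₃ / (4 * c₂) * (1 - (1 + c₂ * T) ^ (-4 : ℤ))) atTop
      (𝓝 (c₃ / (4 * c₂))) := by
    have := (tendsto_zpow_atTop_zero (by norm_num : (-4 : ℤ) < 0)).comp
      (tendsto_atTop_add_const_left _ 1 (tendsto_id.const_mul_atTop hc₂))
    simpa using (this.const_sub 1).const_mul (c₃ / (4 * c₂))
  have hle := le_of_tendsto hlim (eventually_atTop.2 ⟨0, fun T hT => (hbound T hT).le⟩)
  rw [div_le_iff₀ (by positivity), le_inv_mul_iff₀ hU₀] at hle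
  linarith
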